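/- In the setup, 𝒫_T(a,b)_{i_1} is the disjoint union of 𝒫_T(a,b)_{i_1 i_0} and 𝒫_T(a,b)_{i_1, -i_0}, and likewise 𝒫_T(a,b)_{i_1'} is the disjoint union of 𝒫_T(a,b)_{i_1' i_0} and 𝒫_T(a,b)_{i_1', -i_0}; that is, if a T-path from a to b starting with T_{i_1} (respectively T_{i_1'}) contains the index i_0 at all, then i_0 is its second index. (Lemma 2.5.) -/

import Mathlib

open scoped BigOperators Classical

noncomputable section

/-- The `k`-th vertex of the regular `(n+3)`-gon inscribed in the unit circle. -/
def vtx (n : ℕ) (k : Fin (n + 3)) : EuclideanSpace ℝ (Fin 2) :=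
  (WithLp.equiv 2 (Fin 2 → ℝ)).symm
    ![Real.cos (2 * Real.pi * k / (n + 3)), Real.sin (2 * Real.pi * k / (n + 3))]

/-- `u` and `v` are cyclically adjacent vertices of the `(n+3)`-gon. -/
def Adj (n : ℕ) (u v : Fin (n + 3)) : Prop :=
  (u.val + 1) % (n + 3) = v.val ∨ (v.val + 1) % (n + 3) = u.val

/-- The pair `(u, v)` is a diagonal of the polygon. -/
def IsDiag (n : ℕ) (u v : Fin (n + 3)) : Prop :=
  u ≠ v ∧ ¬ Adj n u v

/-- The open segments joining `u,v` and `w,z` intersect (the two edges cross). -/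
def Cross (n : ℕ) (u v w z : Fin (n + 3)) : Prop :=
  (openSegment ℝ (vtx n u) (vtx n v) ∩ openSegment ℝ (vtx n w) (vtx n z)).Nonempty

/-- `(u,v)` and `(w,z)` are the same unordered pair of vertices. -/
def SamePair (n : ℕ) (u v w z : Fin (n + 3)) : Prop :=
  (u = w ∧ v = z) ∨ (u = z ∧ v = w)

/-- A triangulation of the `(n+3)`-gon: `2n+3` edges, the first `n` of which are
pairwise noncrossing diagonals (a maximal such family), and the remaining `n+3`
are the boundary edges. -/
structure Triangulation (n : ℕ) where
  src : Fin (2 * n + 3) → Fin (n + 3)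
  tgt : Fin (2 * n + 3) → Fin (n + 3)
  diag : ∀ i : Fin (2 * n + 3), i.val < n → IsDiag n (src i) (tgt i)
  bdry : ∀ i : Fin (2 * n + 3), n ≤ i.val → Adj n (src i) (tgt i)
  inj : ∀ i j : Fin (2 * n + 3), SamePair n (src i) (tgt i) (src j) (tgt j) → i = j
  noncross : ∀ i j : Fin (2 * n + 3), i ≠ j → ¬ Cross n (src i) (tgt i) (src j) (tgt j)
  bdry_complete : ∀ u v : Fin (n + 3), Adj n u v →
    ∃ i : Fin (2 * n + 3), n ≤ i.val ∧ SamePair n (src i) (tgt i) u v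
  maximal : ∀ u v : Fin (n + 3), IsDiag n u v →
    (∀ i : Fin (2 * n + 3), i.val < n → ¬ Cross n u v (src i) (tgt i)) →
    ∃ i : Fin (2 * n + 3), i.val < n ∧ SamePair n (src i) (tgt i) u v

/-- The edge `T_i` joins the vertices `u` and `v`. -/
def Joins (n : ℕ) (T : Triangulation n) (i : Fin (2 * n + 3)) (u v : Fin (n + 3)) : Prop :=
  SamePair n (T.src i) (T.tgt i) u v

/-- The edge `T_i` crosses the segment from `u` to `v`. -/
def ECross (n : ℕ) (T : Triangulation n) (i : Fin (2 * n + 3)) (u v : Fin (n + 3)) : Prop :=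
  Cross n (T.src i) (T.tgt i) u v

/-- The set of crossing points of the edge `T_i` with the segment from `u` to `v`. -/
def crossPts (n : ℕ) (T : Triangulation n) (i : Fin (2 * n + 3)) (u v : Fin (n + 3)) :
    Set (EuclideanSpace ℝ (Fin 2)) :=
  openSegment ℝ (vtx n (T.src i)) (vtx n (T.tgt i)) ∩ openSegment ℝ (vtx n u) (vtx n v)

/-- A default edge index. -/
def edef (n : ℕ) : Fin (2 * n + 3) := ⟨0, by omega⟩

/-- The data of a path: the list of vertices `a_0,…,a_ℓ` and the list of
edge indices `i_1,…,i_ℓ`. -/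
abbrev PathData (n : ℕ) := List (Fin (n + 3)) × List (Fin (2 * n + 3))

/-- `p` is a `T`-path from `a` to `b`: conditions (T1)–(T6). -/
def IsTPath (n : ℕ) (T : Triangulation n) (a b : Fin (n + 3)) (p : PathData n) : Prop :=
  -- the vertex list has one more entry than the edge list
  p.1.length = p.2.length + 1 ∧
  -- (T1)
  p.1.head? = some a ∧ p.1.getLast? = some b ∧
  -- (T2)
  (∀ k, k < p.2.length →
      Joins n T (p.2.getD k (edef n)) (p.1.getD k a) (p.1.getD (k + 1) a)) ∧
  -- (T3)
  p.2.Nodup ∧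
  -- (T4)
  Odd p.2.length ∧
  -- (T5) (list position `k` carries the `(k+1)`-st edge of the path)
  (∀ k, k < p.2.length → k % 2 = 1 → ECross n T (p.2.getD k (edef n)) a b) ∧
  -- (T6)
  (∀ j k, j < k → k < p.2.length →
      ∀ x ∈ crossPts n T (p.2.getD j (edef n)) a b,
      ∀ y ∈ crossPts n T (p.2.getD k (edef n)) a b,
        dist (vtx n a) x < dist (vtx n a) y)

/-- `𝒫_T(a,b)`: the set of `T`-paths from `a` to `b`. -/
def TPaths (n : ℕ) (T : Triangulation n) (a b : Fin (n + 3)) : Set (PathData n) :=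
  { p | IsTPath n T a b p }

/-- `𝒫_T(a,b)_j`: `T`-paths from `a` to `b` whose first edge is `T_j`. -/
def TPathsFirst (n : ℕ) (T : Triangulation n) (a b : Fin (n + 3)) (j : Fin (2 * n + 3)) :
    Set (PathData n) :=
  { p ∈ TPaths n T a b | p.2.head? = some j }

/-- `𝒫_T(a,b)_{-j}`: `T`-paths from `a` to `b` not containing the index `j`. -/
def TPathsAvoid (n : ℕ) (T : Triangulation n) (a b : Fin (n + 3)) (j : Fin (2 * n + 3)) :
    Set (PathData n) :=
  { p ∈ TPaths n T a b | j ∉ p.2 }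

/-- `𝒫_T(a,b)_{jk}`: `T`-paths from `a` to `b` whose first two edges are `T_j, T_k`. -/
def TPathsFirst2 (n : ℕ) (T : Triangulation n) (a b : Fin (n + 3))
    (j k : Fin (2 * n + 3)) : Set (PathData n) :=
  { p ∈ TPathsFirst n T a b j | p.2[1]? = some k }

/-- `𝒫_T(a,b)_{j,-k}`: `T`-paths from `a` to `b` whose first edge is `T_j` and which do
not contain the index `k`. -/
def TPathsFirstAvoid (n : ℕ) (T : Triangulation n) (a b : Fin (n + 3))
    (j k : Fin (2 * n + 3)) : Set (PathData n) :=
  { p ∈ TPathsFirst n T a b j | k ∉ p.2 }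

/-- The ambient field `F = ℚ(x_1,…,x_{2n+3})`. -/
abbrev F (n : ℕ) := FractionRing (MvPolynomial (Fin (2 * n + 3)) ℚ)

/-- The variable `x_i ∈ F` attached to the edge `T_i`. -/
def X (n : ℕ) (i : Fin (2 * n + 3)) : F n :=
  algebraMap (MvPolynomial (Fin (2 * n + 3)) ℚ) (F n) (MvPolynomial.X i)

/-- `x(α)` for a path with edge list `es = [i_1,…,i_ℓ]`: the product of the
variables of the odd edges times the inverse of the product of the variables of
the even edges (list position `k` carries the `(k+1)`-st edge). -/
def pathX (n : ℕ) (es : List (Fin (2 * n + 3))) : F n :=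
  (∏ k ∈ (Finset.range es.length).filter (fun k => k % 2 = 0), X n (es.getD k (edef n))) *
  (∏ k ∈ (Finset.range es.length).filter (fun k => k % 2 = 1), X n (es.getD k (edef n)))⁻¹

end


section Aux
open Real

lemma cos_aux (N s : ℝ) (hN : 2 ≤ N) (h3 : 3 ≤ s) (hs : s ≤ 2*N - 3) :
    Real.cos (π * s / N) < Real.cos (π / N) := by
  have hπ := Real.pi_pos
  have hN0 : (0:ℝ) < N := by linarith
  rcases le_or_gt s N with h | h
  · apply Real.cos_lt_cos_of_nonneg_of_le_pi
    · positivity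
    · rw [div_le_iff₀ hN0]; nlinarith
    · rw [div_lt_div_iff_of_pos_right hN0]; nlinarith
  · have key : π * s / N = 2*π - π*(2*N - s)/N := by field_simp; ring
    rw [key, Real.cos_two_pi_sub]
    apply Real.cos_lt_cos_of_nonneg_of_le_pi
    · positivity
    · rw [div_le_iff₀ hN0]; nlinarith
    · rw [div_lt_div_iff_of_pos_right hN0]; nlinarith

lemma adj_no_cross (n : ℕ) (u v a b : Fin (n+3)) (huv : (u.val + 1) % (n+3) = v.val)
    (hab : a ≠ b) (hnadj : ¬ Adj n a b) : ¬ Cross n u v a b := by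
  rintro ⟨x, ⟨t1, s1, ht1, hs1, hts1, hx1⟩, ⟨t2, s2, ht2, hs2, hts2, hx2⟩⟩
  have hπ := Real.pi_pos
  set N : ℝ := ((n:ℝ)+3) with hNdef
  have hN0 : (0:ℝ) < N := by positivity
  set m : ℝ := π * (2*(u.val:ℝ)+1) / N with hm
  set f : EuclideanSpace ℝ (Fin 2) → ℝ := fun p => p 0 * Real.cos m + p 1 * Real.sin m with hf
  have hfvtx : ∀ w : Fin (n+3), f (vtx n w) = Real.cos (2*π*(w.val:ℝ)/N - m) := by
    intro w
    simp only [hf, vtx, WithLp.equiv_symm_apply, WithLp.ofLp_toLp, Matrix.cons_val_zero, Matrix.cons_val_one,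
      Matrix.head_cons, Real.cos_sub, hNdef]
  have hu : f (vtx n u) = Real.cos (π / N) := by
    rw [hfvtx]
    have h : 2*π*(u.val:ℝ)/N - m = -(π/N) := by rw [hm]; field_simp; ring
    rw [h, Real.cos_neg]
  have hv : f (vtx n v) = Real.cos (π / N) := by
    rcases Nat.lt_or_ge (u.val+1) (n+3) with h | h
    · have hval : (v.val:ℝ) = (u.val:ℝ) + 1 := by
        rw [← huv, Nat.mod_eq_of_lt h]; push_cast; ring
      rw [hfvtx, hval]
      have h2 : 2*π*((u.val:ℝ)+1)/N - m = π/N := by rw [hm]; field_simp; ring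
      rw [h2]
    · have hu3 : u.val + 1 = n + 3 := by have := u.isLt; omega
      have hval : (v.val:ℝ) = 0 := by
        rw [← huv, hu3, Nat.mod_self]; norm_num
      have hcast : (u.val:ℝ) = N - 1 := by
        rw [hNdef]; have : u.val = n + 2 := by omega
        rw [this]; push_cast; ring
      rw [hfvtx, hval]
      have h2 : 2*π*(0:ℝ)/N - m = -(2*π - π/N) := by rw [hm, hcast]; field_simp; ring
      rw [h2, Real.cos_neg, Real.cos_two_pi_sub]
  have hlt : ∀ w : Fin (n+3), w ≠ u → w ≠ v → f (vtx n w) < Real.cos (π/N) := by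
    intro w hwu hwv
    rw [hfvtx]
    set t : ℤ := 2*(w.val:ℤ) - 2*(u.val:ℤ) - 1 with htd
    have harg : 2*π*(w.val:ℝ)/N - m = π * (t:ℝ) / N := by
      rw [hm, htd]; push_cast; field_simp; ring
    rw [harg, ← Real.cos_abs (π * (t:ℝ) / N)]
    have habs : |π * (t:ℝ) / N| = π * ((|t| : ℤ):ℝ) / N := by
      rw [abs_div, abs_mul, abs_of_nonneg Real.pi_nonneg, abs_of_pos hN0, Int.cast_abs]
    rw [habs]
    have hwlt : w.val < n + 3 := w.isLt
    have hult : u.val < n + 3 := u.isLt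
    have hvlt : v.val < n + 3 := v.isLt
    have hne1 : w.val ≠ u.val := fun h => hwu (Fin.ext h)
    have hne2 : w.val ≠ v.val := fun h => hwv (Fin.ext h)
    have hvcase : (v.val = u.val + 1 ∧ u.val + 1 < n+3) ∨ (v.val = 0 ∧ u.val = n+2) := by
      rcases Nat.lt_or_ge (u.val+1) (n+3) with h | h
      · left; exact ⟨by rw [← huv, Nat.mod_eq_of_lt h], h⟩
      · right
        have hu3 : u.val + 1 = n + 3 := by omega
        exact ⟨by rw [← huv, hu3, Nat.mod_self], by omega⟩
    have hb1 : 3 ≤ |t| := by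
      rw [le_abs]
      rw [htd]; omega
    have hb2 : |t| ≤ 2*((n:ℤ)+3) - 3 := by
      rw [abs_le, htd]; omega
    apply cos_aux N ((|t| : ℤ):ℝ) (by rw [hNdef]; have : (0:ℝ) ≤ (n:ℝ) := Nat.cast_nonneg n; linarith)
    · exact_mod_cast hb1
    · rw [hNdef]; push_cast; exact_mod_cast hb2
  -- combine
  have hcomb : ∀ (t s : ℝ) (p q : EuclideanSpace ℝ (Fin 2)),
      f (t • p + s • q) = t * f p + s * f q := by
    intro t s p q
    simp only [hf, PiLp.add_apply, PiLp.smul_apply, smul_eq_mul]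
    ring
  have hfx1 : f x = Real.cos (π/N) := by
    rw [← hx1, hcomb, hu, hv, ← add_mul, hts1, one_mul]
  have hle : ∀ w : Fin (n+3), f (vtx n w) ≤ Real.cos (π/N) := by
    intro w
    by_cases h1 : w = u
    · rw [h1, hu]
    by_cases h2 : w = v
    · rw [h2, hv]
    exact (hlt w h1 h2).le
  have hstrict : f (vtx n a) < Real.cos (π/N) ∨ f (vtx n b) < Real.cos (π/N) := by
    by_cases haa : a = u ∨ a = v
    · right
      apply hlt
      · intro h; apply hnadj
        rcases haa with h' | h'
        · exact absurd (h' ▸ h ▸ rfl : a = b) hab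
        · right; rw [h', h]; exact huv
      · intro h; apply hnadj
        rcases haa with h' | h'
        · left; rw [h', h]; exact huv
        · exact absurd (h' ▸ h ▸ rfl : a = b) hab
    · push_neg at haa
      left; exact hlt a haa.1 haa.2
  have hfx2 : f x < Real.cos (π/N) := by
    rw [← hx2, hcomb]
    have ha' := hle a
    have hb' := hle b
    have hc : t2 * Real.cos (π/N) + s2 * Real.cos (π/N) = Real.cos (π/N) := by
      rw [← add_mul, hts2, one_mul]
    rcases hstrict with h | h
    · linarith [mul_lt_mul_of_pos_left h ht2, mul_le_mul_of_nonneg_left hb' hs2.le]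
    · linarith [mul_lt_mul_of_pos_left h hs2, mul_le_mul_of_nonneg_left ha' ht2.le]
  rw [hfx1] at hfx2
  exact lt_irrefl _ hfx2


lemma not_adj_self (n : ℕ) (u : Fin (n+3)) : ¬ Adj n u u := by
  intro h
  have hu := u.isLt
  have h' : (u.val + 1) % (n+3) = u.val := by rcases h with h | h <;> exact h
  rcases Nat.lt_or_ge (u.val + 1) (n+3) with h2 | h2
  · rw [Nat.mod_eq_of_lt h2] at h'; omega
  · have h3 : u.val + 1 = n + 3 := by omega
    rw [h3, Nat.mod_self] at h'; omega

lemma joins_ne (n : ℕ) (T : Triangulation n) (i : Fin (2*n+3)) (u v : Fin (n+3))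
    (h : Joins n T i u v) : u ≠ v := by
  intro he
  subst he
  have hst : T.src i = u ∧ T.tgt i = u := by
    rcases h with ⟨h1, h2⟩ | ⟨h1, h2⟩ <;> exact ⟨h1, h2⟩
  rcases Nat.lt_or_ge i.val n with hd | hb
  · exact (T.diag i hd).1 (hst.1.trans hst.2.symm)
  · have := T.bdry i hb
    rw [hst.1, hst.2] at this
    exact not_adj_self n u this

lemma no_cross_bdry (n : ℕ) (u v a b : Fin (n+3)) (huv : Adj n u v)
    (hab : a ≠ b) (hnadj : ¬ Adj n a b) : ¬ Cross n u v a b := by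
  rcases huv with h | h
  · exact adj_no_cross n u v a b h hab hnadj
  · rintro ⟨x, hx1, hx2⟩
    exact adj_no_cross n v u a b h hab hnadj ⟨x, by rwa [openSegment_symm] at hx1, hx2⟩

lemma key_lemma (n : ℕ) (T : Triangulation n) (a b : Fin (n+3)) (i0 j : Fin (2*n+3))
    (hji0 : j ≠ i0) (hi0M : ECross n T i0 a b)
    (hdiag : ∀ e : Fin (2*n+3), ECross n T e a b → e.val < n)
    (hclosest : ∀ e : Fin (2*n+3), e.val < n → ECross n T e a b → e ≠ i0 →
      ∀ x ∈ crossPts n T i0 a b, ∀ y ∈ crossPts n T e a b,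
        dist (vtx n a) x < dist (vtx n a) y) :
    TPathsFirst n T a b j = TPathsFirst2 n T a b j i0 ∪ TPathsFirstAvoid n T a b j i0 ∧
    Disjoint (TPathsFirst2 n T a b j i0) (TPathsFirstAvoid n T a b j i0) := by
  constructor
  · ext p
    constructor
    · intro hp
      by_cases hmem : i0 ∈ p.2
      · left
        refine ⟨hp, ?_⟩
        obtain ⟨k, hk, hgk⟩ := List.getElem_of_mem hmem
        obtain ⟨hTp, hhead⟩ := hp
        obtain ⟨hlen, hh, hl, hT2, hnd, hodd, hT5, hT6⟩ := hTp
        have h0lt : 0 < p.2.length := Nat.lt_of_le_of_lt (Nat.zero_le k) hk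
        have h0 : p.2[0] = j := by
          rw [List.head?_eq_getElem?, List.getElem?_eq_getElem h0lt] at hhead
          exact Option.some.inj hhead
        have hk0 : k ≠ 0 := by
          intro h; subst h; rw [h0] at hgk; exact hji0 hgk
        rcases eq_or_ne k 1 with h1 | h1
        · subst h1; rw [List.getElem?_eq_getElem hk, hgk]
        · exfalso
          have hk2 : 2 ≤ k := by omega
          have hmex : ∃ m, m % 2 = 1 ∧ 1 ≤ m ∧ m < k := by
            rcases Nat.even_or_odd k with ⟨c, hc⟩ | ⟨c, hc⟩
            · exact ⟨k - 1, by omega, by omega, by omega⟩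
            · exact ⟨1, by norm_num, le_refl 1, by omega⟩
          obtain ⟨m, hm2, hm1, hmk⟩ := hmex
          have hmlt : m < p.2.length := lt_trans hmk hk
          have hecm : ECross n T (p.2.getD m (edef n)) a b := hT5 m hmlt hm2
          have hgm : p.2.getD m (edef n) = p.2[m] := List.getD_eq_getElem _ _ hmlt
          have hne : p.2.getD m (edef n) ≠ i0 := by
            rw [hgm]
            intro h
            rw [← hgk] at h
            exact (by omega : m ≠ k) ((hnd.getElem_inj_iff).1 h)
          have hecm2 := hecm
          obtain ⟨x0, hx0⟩ := hecm2
          obtain ⟨y0, hy0⟩ := hi0M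
          have hgkD : p.2.getD k (edef n) = i0 := by
            rw [List.getD_eq_getElem _ _ hk, hgk]
          have h6 := hT6 m k hmk hk x0 hx0 y0 (by rw [hgkD]; exact hy0)
          have hcl := hclosest (p.2.getD m (edef n)) (hdiag _ hecm) hecm hne
            y0 hy0 x0 hx0
          exact lt_asymm h6 hcl
      · right; exact ⟨hp, hmem⟩
    · rintro (hp | hp)
      · exact hp.1
      · exact hp.1
  · rw [Set.disjoint_left]
    rintro p ⟨hp1, h2⟩ ⟨hq1, h3⟩
    rw [List.getElem?_eq_some_iff] at h2
    obtain ⟨hh, he⟩ := h2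
    exact h3 (he ▸ List.getElem_mem hh)

end Aux

/-- Lemma 2.5. -/
theorem TPathsFirst_eq_union_first2_avoid
    (n : ℕ) (hn : 1 ≤ n) (T : Triangulation n) (a b c d : Fin (n + 3))
    (i0 i1 i1' : Fin (2 * n + 3))
    (hab : a ≠ b) (hnadj : ¬ Adj n a b)
    (hM : ¬ ∃ i : Fin (2 * n + 3), Joins n T i a b)
    (hi0d : i0.val < n) (hi0M : ECross n T i0 a b)
    (hclosest : ∀ j : Fin (2 * n + 3), j.val < n → ECross n T j a b → j ≠ i0 →
      ∀ x ∈ crossPts n T i0 a b, ∀ y ∈ crossPts n T j a b,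
        dist (vtx n a) x < dist (vtx n a) y)
    (hcd : Joins n T i0 c d)
    (hi1' : Joins n T i1' a c) (hi1 : Joins n T i1 a d)
    :
    (TPathsFirst n T a b i1 = TPathsFirst2 n T a b i1 i0 ∪ TPathsFirstAvoid n T a b i1 i0 ∧
      Disjoint (TPathsFirst2 n T a b i1 i0) (TPathsFirstAvoid n T a b i1 i0)) ∧
    (TPathsFirst n T a b i1' = TPathsFirst2 n T a b i1' i0 ∪ TPathsFirstAvoid n T a b i1' i0 ∧
      Disjoint (TPathsFirst2 n T a b i1' i0) (TPathsFirstAvoid n T a b i1' i0)) := by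
  have hac : a ≠ c := joins_ne n T i1' a c hi1'
  have had : a ≠ d := joins_ne n T i1 a d hi1
  have hdiagcross : ∀ e : Fin (2*n+3), ECross n T e a b → e.val < n := by
    intro e he
    by_contra h
    push_neg at h
    exact no_cross_bdry n _ _ a b (T.bdry e h) hab hnadj he
  have hi1ne : i1 ≠ i0 := by
    intro h
    rw [h] at hi1
    rcases hi1 with ⟨h1, h2⟩ | ⟨h1, h2⟩ <;> rcases hcd with ⟨h3, h4⟩ | ⟨h3, h4⟩
    · exact hac (h1.symm.trans h3)
    · exact had (h1.symm.trans h3)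
    · exact had (h2.symm.trans h4)
    · exact hac (h2.symm.trans h4)
  have hi1'ne : i1' ≠ i0 := by
    intro h
    rw [h] at hi1'
    rcases hi1' with ⟨h1, h2⟩ | ⟨h1, h2⟩ <;> rcases hcd with ⟨h3, h4⟩ | ⟨h3, h4⟩
    · exact hac (h1.symm.trans h3)
    · exact had (h1.symm.trans h3)
    · exact had (h2.symm.trans h4)
    · exact hac (h2.symm.trans h4)
  exact ⟨key_lemma n T a b i0 i1 hi1ne hi0M hdiagcross hclosest,
    key_lemma n T a b i0 i1' hi1'ne hi0M hdiagcross hclosest⟩
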